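/- Let 0 < r ≤ B be real numbers and h : [0,r] → ℝ continuous, h(0)=0, differentiable on (0,r), strictly increasing, with s_h := sup_{0<t<r} h(t)/(t·h'(t)) < ∞. Then the function t ↦ h(t) · ln(B·e^{s_h}/t) is increasing on (0,r]. -/

import Mathlib

/-!
Writing `f t = h t * log (C / t)`, one has `f' t = h' t * log (C / t) - h t / t`. The hypothesis
on `h / (t h')` gives `h t / t ≤ s * h' t`, and `t * exp s ≤ C` gives `s ≤ log (C / t)`, so
`f' ≥ 0` on the interior and `f` is monotone.
-/

open Real Set

lemma hasDerivAt_mul_log_div {h : ℝ → ℝ} {h' C t : ℝ} (hh : HasDerivAt h h' t) (hC : C ≠ 0)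
    (ht : t ≠ 0) :
    HasDerivAt (fun x => h x * log (C / x)) (h' * log (C / t) - h t / t) t := by
  have hlog : HasDerivAt (fun x => log (C / x)) (-(1 / t)) t := by
    have := ((hasDerivAt_inv ht).const_mul C).log (div_ne_zero hC ht)
    simp only [← div_eq_mul_inv] at this
    convert this using 1
    field_simp
  exact (hh.fun_mul hlog).congr_deriv (by ring)

lemma div_le_mul_log_div {a d s t C : ℝ} (ht : 0 < t) (hd : 0 < d) (ha : a / (t * d) ≤ s)
    (htC : t * exp s ≤ C) : a / t ≤ d * log (C / t) := by
  have has : a / t ≤ s * d := by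
    rw [div_le_iff₀ (mul_pos ht hd)] at ha
    rw [div_le_iff₀ ht]
    linarith
  have hslog : s ≤ log (C / t) := by
    rw [le_log_iff_exp_le (div_pos ((mul_pos ht (exp_pos s)).trans_le htC) ht),
      le_div_iff₀ ht, mul_comm]
    exact htC
  calc a / t ≤ s * d := has
    _ ≤ d * log (C / t) := by rw [mul_comm]; exact mul_le_mul_of_nonneg_left hslog hd.le

theorem monotoneOn_mul_log_div {h h' : ℝ → ℝ} {r C s : ℝ} (hC : 0 < C) (hrC : r * exp s ≤ C)
    (hcont : ContinuousOn h (Ioc 0 r)) (hderiv : ∀ t ∈ Ioo 0 r, HasDerivAt h (h' t) t)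
    (hpos : ∀ t ∈ Ioo 0 r, 0 < h' t) (hsup : ∀ t ∈ Ioo 0 r, h t / (t * h' t) ≤ s) :
    MonotoneOn (fun t => h t * log (C / t)) (Ioc 0 r) := by
  have hf' : ∀ t ∈ Ioo 0 r,
      HasDerivAt (fun x => h x * log (C / x)) (h' t * log (C / t) - h t / t) t :=
    fun t ht => hasDerivAt_mul_log_div (hderiv t ht) hC.ne' ht.1.ne'
  refine monotoneOn_of_deriv_nonneg (convex_Ioc 0 r) ?_ ?_ ?_
  · refine hcont.mul (ContinuousOn.log ?_ fun t ht => (div_pos hC ht.1).ne')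
    exact continuousOn_const.div continuousOn_id fun t ht => ht.1.ne'
  · rw [interior_Ioc]
    exact fun t ht => (hf' t ht).differentiableAt.differentiableWithinAt
  · rw [interior_Ioc]
    intro t ht
    rw [(hf' t ht).deriv, sub_nonneg]
    refine div_le_mul_log_div ht.1 (hpos t ht) (hsup t ht) ?_
    exact (mul_le_mul_of_nonneg_right ht.2.le (exp_pos s).le).trans hrC

theorem stmt_1_general (r B : ℝ) (hr : 0 < r) (hrB : r ≤ B) (h h' : ℝ → ℝ) (s : ℝ)
    (hcont : ContinuousOn h (Set.Icc 0 r))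
    (hderiv : ∀ t ∈ Set.Ioo 0 r, HasDerivAt h (h' t) t)
    (hpos : ∀ t ∈ Set.Ioo 0 r, 0 < h' t)
    (hsup : ∀ t ∈ Set.Ioo 0 r, h t / (t * h' t) ≤ s) :
    MonotoneOn (fun t => h t * Real.log (B * Real.exp s / t)) (Set.Ioc 0 r) :=
  monotoneOn_mul_log_div (mul_pos (hr.trans_le hrB) (exp_pos s))
    (mul_le_mul_of_nonneg_right hrB (exp_pos s).le) (hcont.mono Ioc_subset_Icc_self)
    hderiv hpos hsup

/-- If `0 < r ≤ B`, `h` is continuous on `[0,r]`, `h 0 = 0`, strictly increasing,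
differentiable on `(0,r)` with positive derivative and `h t / (t * h' t) ≤ s`,
then `t ↦ h t * log (B * exp s / t)` is increasing on `(0,r]`. -/
theorem stmt_1 (r B : ℝ) (hr : 0 < r) (hrB : r ≤ B) (h h' : ℝ → ℝ) (s : ℝ)
    (hcont : ContinuousOn h (Set.Icc 0 r)) (h0 : h 0 = 0)
    (hmono : StrictMonoOn h (Set.Icc 0 r))
    (hderiv : ∀ t ∈ Set.Ioo 0 r, HasDerivAt h (h' t) t)
    (hpos : ∀ t ∈ Set.Ioo 0 r, 0 < h' t)
    (hsup : ∀ t ∈ Set.Ioo 0 r, h t / (t * h' t) ≤ s) :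
    MonotoneOn (fun t => h t * Real.log (B * Real.exp s / t)) (Set.Ioc 0 r) :=
  stmt_1_general r B hr hrB h h' s hcont hderiv hpos hsup
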